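/- If a path through a balanced vertex of a geodesic net takes the first right turn (i.e., leaves along the edge immediately following the incoming edge in counterclockwise order), then its turn angle at that vertex is strictly negative. -/
import Mathlib


open scoped Classical

/-- A geodesic net in the Euclidean plane: a finite connected graph embedded in `ℝ²`
whose edges are straight segments between distinct vertices, such that no vertex lies
in the interior of an edge and the interiors of distinct edges are disjoint. -/
structure GeodesicNet where
  verts : Finset (EuclideanSpace ℝ (Fin 2))
  Adj : EuclideanSpace ℝ (Fin 2) → EuclideanSpace ℝ (Fin 2) → Prop
  symm : ∀ u v, Adj u v → Adj v u
  loopless : ∀ v, ¬Adj v v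
  mem_of_adj : ∀ u v, Adj u v → u ∈ verts ∧ v ∈ verts
  nonempty : verts.Nonempty
  connected : ∀ u ∈ verts, ∀ v ∈ verts, Relation.ReflTransGen Adj u v
  no_vertex_inside : ∀ u v, Adj u v → ∀ w ∈ verts, w ∉ openSegment ℝ u v
  edges_disjoint : ∀ u v x y, Adj u v → Adj x y →
    ({u, v} : Set (EuclideanSpace ℝ (Fin 2))) ≠ {x, y} →
    openSegment ℝ u v ∩ openSegment ℝ x y = ∅

namespace GeodesicNet

variable (G : GeodesicNet)

/-- The neighbours of a vertex, as a finset. -/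
noncomputable def nbhd (v : EuclideanSpace ℝ (Fin 2)) : Finset (EuclideanSpace ℝ (Fin 2)) :=
  G.verts.filter fun u => G.Adj v u

/-- The unit vector at `v` pointing towards `u`. -/
noncomputable def dir (_G : GeodesicNet) (v u : EuclideanSpace ℝ (Fin 2)) : EuclideanSpace ℝ (Fin 2) :=
  ‖u - v‖⁻¹ • (u - v)

/-- A vertex is balanced if it has degree at least `3` and the unit vectors along the
incident edges (directed away from the vertex) sum to zero. -/
noncomputable def Balanced (v : EuclideanSpace ℝ (Fin 2)) : Prop :=
  v ∈ G.verts ∧ 3 ≤ (G.nbhd v).card ∧ ∑ u ∈ G.nbhd v, G.dir v u = 0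

/-- A vertex is unbalanced if it is a vertex of the net and is not balanced. -/
noncomputable def Unbalanced (v : EuclideanSpace ℝ (Fin 2)) : Prop :=
  v ∈ G.verts ∧ ¬G.Balanced v

end GeodesicNet

instance : Fact (Module.finrank ℝ (EuclideanSpace ℝ (Fin 2)) = 2) :=
  ⟨finrank_euclideanSpace_fin⟩

/-- The standard (counterclockwise) orientation of the Euclidean plane. -/
noncomputable def stdOrient : Orientation ℝ (EuclideanSpace ℝ (Fin 2)) (Fin 2) :=
  (EuclideanSpace.basisFun (Fin 2) ℝ).toBasis.orientation

/-- The turn angle, in `(-π, π]`, at the vertex `v` of a piecewise geodesic path coming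
from `p` and continuing to `q`: the signed angle from the forward extension of the
incoming segment to the outgoing segment (left turns positive); a backtrack counts
as `+π`. -/
noncomputable def turnAngle (p v q : EuclideanSpace ℝ (Fin 2)) : ℝ :=
  (stdOrient.oangle (v - p) (q - v)).toReal

/-- The counterclockwise angle, in `(0, 2π]`, from direction `e` to direction `f`. -/
noncomputable def ccwAngle (e f : EuclideanSpace ℝ (Fin 2)) : ℝ :=
  if (stdOrient.oangle e f).toReal ≤ 0 then (stdOrient.oangle e f).toReal + 2 * Real.pi
  else (stdOrient.oangle e f).toReal


open Real in
lemma kahler_im_eq_areaForm (x y : EuclideanSpace ℝ (Fin 2)) :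
    (stdOrient.kahler x y).im = stdOrient.areaForm x y := by
  simp [Orientation.kahler_apply_apply, Complex.real_smul]

open Real in
lemma oangle_toReal_mem_Ioo_iff (x y : EuclideanSpace ℝ (Fin 2)) :
    (stdOrient.oangle x y).toReal ∈ Set.Ioo 0 π ↔ 0 < stdOrient.areaForm x y := by
  rw [Orientation.oangle, Complex.arg_coe_angle_toReal_eq_arg, ← kahler_im_eq_areaForm]
  set z := stdOrient.kahler x y with hz
  constructor
  · rintro ⟨h0, hpi⟩
    rcases lt_trichotomy z.im 0 with h | h | h
    · exact absurd (Complex.arg_nonneg_iff.1 h0.le) (not_le.2 h)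
    · rcases le_or_gt 0 z.re with hre | hre
      · exact absurd (Complex.arg_eq_zero_iff.2 ⟨hre, h⟩) h0.ne'
      · exact absurd (Complex.arg_eq_pi_iff.2 ⟨hre, h⟩) hpi.ne
    · exact h
  · intro h
    have h0 : 0 ≤ z.arg := Complex.arg_nonneg_iff.2 h.le
    have hne0 : z.arg ≠ 0 := fun hc => by
      have := (Complex.arg_eq_zero_iff.1 hc).2; exact h.ne' this
    have hnepi : z.arg ≠ π := fun hc => by
      have := (Complex.arg_eq_pi_iff.1 hc).2; exact h.ne' this
    exact ⟨lt_of_le_of_ne h0 (Ne.symm hne0), lt_of_le_of_ne (Complex.arg_le_pi z) hnepi⟩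

open Real in
lemma areaForm_eq_zero_imp {x y : EuclideanSpace ℝ (Fin 2)} (hx : x ≠ 0) (hy : y ≠ 0)
    (h : stdOrient.areaForm x y = 0) : ∃ r : ℝ, y = r • x := by
  have him : (stdOrient.kahler x y).im = 0 := by rw [kahler_im_eq_areaForm]; exact h
  have hor : stdOrient.oangle x y = 0 ∨ stdOrient.oangle x y = π := by
    rcases le_or_gt 0 (stdOrient.kahler x y).re with hre | hre
    · left
      rw [Orientation.oangle, Complex.arg_eq_zero_iff.2 ⟨hre, him⟩, Real.Angle.coe_zero]
    · right
      rw [Orientation.oangle, Complex.arg_eq_pi_iff.2 ⟨hre, him⟩]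
  rcases stdOrient.oangle_eq_zero_or_eq_pi_iff_right_eq_smul.1 hor with h' | h'
  · exact absurd h' hx
  · exact h'

open Real in
lemma GeodesicNet.dir_injOn (G : GeodesicNet) {v u w : EuclideanSpace ℝ (Fin 2)}
    (hu : G.Adj v u) (hw : G.Adj v w) (h : G.dir v u = G.dir v w) : u = w := by
  by_contra hne
  have huv : u ≠ v := fun hc => G.loopless v (hc ▸ hu)
  have hwv : w ≠ v := fun hc => G.loopless v (hc ▸ hw)
  have ha : (0:ℝ) < ‖u - v‖ := norm_pos_iff.2 (sub_ne_zero.2 huv)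
  have hb : (0:ℝ) < ‖w - v‖ := norm_pos_iff.2 (sub_ne_zero.2 hwv)
  set c : ℝ := min ‖u - v‖ ‖w - v‖ / 2 with hc
  have hcpos : 0 < c := by positivity
  set x : EuclideanSpace ℝ (Fin 2) := v + c • G.dir v u with hx
  have key : ∀ z : EuclideanSpace ℝ (Fin 2), G.Adj v z → G.dir v u = G.dir v z →
      min ‖u - v‖ ‖w - v‖ ≤ ‖z - v‖ → x ∈ openSegment ℝ v z := by
    intro z hz hdz hmz
    have hzv : z ≠ v := fun hc' => G.loopless v (hc' ▸ hz)
    have hz0 : (0:ℝ) < ‖z - v‖ := norm_pos_iff.2 (sub_ne_zero.2 hzv)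
    have hclt : c < ‖z - v‖ := by
      have : c < min ‖u - v‖ ‖w - v‖ := by
        rw [hc]; linarith [lt_min ha hb]
      exact this.trans_le hmz
    rw [openSegment_eq_image]
    refine ⟨c / ‖z - v‖, ⟨by positivity, (div_lt_one hz0).2 hclt⟩, ?_⟩
    rw [hx, hdz]
    show (1 - c / ‖z - v‖) • v + (c / ‖z - v‖) • z = v + c • (‖z - v‖⁻¹ • (z - v))
    rw [smul_smul, div_eq_mul_inv]
    module
  have hxu : x ∈ openSegment ℝ v u := key u hu rfl (min_le_left _ _)
  have hxw : x ∈ openSegment ℝ v w := key w hw h (min_le_right _ _)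
  have hset : ({v, u} : Set (EuclideanSpace ℝ (Fin 2))) ≠ {v, w} := by
    intro hcset
    have : u ∈ ({v, w} : Set (EuclideanSpace ℝ (Fin 2))) := by
      rw [← hcset]; exact Set.mem_insert_of_mem _ rfl
    rcases this with h' | h'
    · exact huv h'
    · exact hne h'
  have := G.edges_disjoint v u v w hu hw hset
  exact absurd (Set.mem_inter hxu hxw) (by rw [this]; exact Set.notMem_empty x)

open Real in
/-- First Turn Lemma: if a path through a balanced vertex `v` of a
geodesic net, entering from `p` along an edge and leaving towards `q`, takes the first
right turn (i.e. the edge `v q` immediately follows the edge `v p` in counterclockwise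
order among the edges incident to `v`), then its turn angle at `v` is strictly
negative. -/
theorem first_turn_lemma
    (G : GeodesicNet) (v p q : EuclideanSpace ℝ (Fin 2))
    (hvp : G.Adj v p) (hvq : G.Adj v q) (hpq : q ≠ p)
    (hbal : G.Balanced v)
    (hfirst : ∀ x, G.Adj v x → ccwAngle (p - v) (q - v) ≤ ccwAngle (p - v) (x - v)) :
    turnAngle p v q < 0 := by
  obtain ⟨hv, hcard, hsum⟩ := hbal
  have hpv : p ≠ v := fun h => G.loopless v (h ▸ hvp)
  have hqv : q ≠ v := fun h => G.loopless v (h ▸ hvq)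
  have he : p - v ≠ 0 := sub_ne_zero.2 hpv
  have hf : q - v ≠ 0 := sub_ne_zero.2 hqv
  have hepos : (0:ℝ) < ‖p - v‖ := norm_pos_iff.2 he
  have hex : ∃ x ∈ G.nbhd v, 0 < stdOrient.areaForm (p - v) (x - v) := by
    by_contra hcon
    push_neg at hcon
    set d : EuclideanSpace ℝ (Fin 2) := G.dir v p with hd
    have hLsum : ∑ u ∈ G.nbhd v, stdOrient.areaForm (p - v) (G.dir v u) = 0 := by
      rw [← map_sum, hsum, map_zero]
    have hLle : ∀ u ∈ G.nbhd v, stdOrient.areaForm (p - v) (G.dir v u) ≤ 0 := by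
      intro u hu
      show stdOrient.areaForm (p - v) (‖u - v‖⁻¹ • (u - v)) ≤ 0
      rw [map_smul, smul_eq_mul]
      exact mul_nonpos_of_nonneg_of_nonpos (inv_nonneg.2 (norm_nonneg _)) (hcon u hu)
    have hLzero : ∀ u ∈ G.nbhd v, stdOrient.areaForm (p - v) (G.dir v u) = 0 :=
      (Finset.sum_eq_zero_iff_of_nonpos hLle).1 hLsum
    have himg : ∀ u ∈ G.nbhd v,
        G.dir v u ∈ ({d, -d} : Finset (EuclideanSpace ℝ (Fin 2))) := by
      intro u hu
      have hadj : G.Adj v u := (Finset.mem_filter.1 hu).2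
      have huv : u ≠ v := fun hc => G.loopless v (hc ▸ hadj)
      have hu0 : u - v ≠ 0 := sub_ne_zero.2 huv
      have hL0 : stdOrient.areaForm (p - v) (u - v) = 0 := by
        have := hLzero u hu
        rw [show G.dir v u = ‖u - v‖⁻¹ • (u - v) from rfl, map_smul, smul_eq_mul] at this
        rcases mul_eq_zero.1 this with h' | h'
        · exact absurd h' (inv_ne_zero (norm_ne_zero_iff.2 hu0))
        · exact h'
      obtain ⟨r, hr⟩ := areaForm_eq_zero_imp he hu0 hL0
      have hr0 : r ≠ 0 := by
        rintro rfl; rw [zero_smul] at hr; exact hu0 hr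
      have hdir : G.dir v u = (‖r • (p - v)‖⁻¹ * r) • (p - v) := by
        show ‖u - v‖⁻¹ • (u - v) = _
        rw [hr, smul_smul]
      rw [norm_smul, Real.norm_eq_abs] at hdir
      rcases lt_or_gt_of_ne hr0 with hneg | hpos
      · have hsc : (|r| * ‖p - v‖)⁻¹ * r = -‖p - v‖⁻¹ := by
          rw [abs_of_neg hneg]; field_simp
        have : G.dir v u = -d := by
          rw [hdir, hsc, hd, neg_smul]; rfl
        rw [this]; simp
      · have hsc : (|r| * ‖p - v‖)⁻¹ * r = ‖p - v‖⁻¹ := by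
          rw [abs_of_pos hpos]; field_simp
        have : G.dir v u = d := by
          rw [hdir, hsc, hd]; rfl
        rw [this]; simp
    have hinj : Set.InjOn (G.dir v) ↑(G.nbhd v) := by
      intro a ha b hb hab
      exact G.dir_injOn (Finset.mem_filter.1 ha).2 (Finset.mem_filter.1 hb).2 hab
    have hle2 := Finset.card_le_card_of_injOn (G.dir v) himg hinj
    have : ({d, -d} : Finset (EuclideanSpace ℝ (Fin 2))).card ≤ 2 := by
      apply (Finset.card_insert_le _ _).trans
      simp
    omega
  obtain ⟨x, hxmem, hxpos⟩ := hex
  have hxadj : G.Adj v x := (Finset.mem_filter.1 hxmem).2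
  have hθx := (oangle_toReal_mem_Ioo_iff (p - v) (x - v)).2 hxpos
  have hccwx : ccwAngle (p - v) (x - v) < π := by
    rw [ccwAngle, if_neg (not_le.2 hθx.1)]; exact hθx.2
  have hccwf : ccwAngle (p - v) (q - v) < π := lt_of_le_of_lt (hfirst x hxadj) hccwx
  have hθf : (stdOrient.oangle (p - v) (q - v)).toReal ∈ Set.Ioo 0 π := by
    rw [ccwAngle] at hccwf
    split_ifs at hccwf with hle
    · exfalso
      linarith [Real.Angle.neg_pi_lt_toReal (stdOrient.oangle (p - v) (q - v))]
    · exact ⟨not_le.1 hle, hccwf⟩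
  rw [turnAngle, show v - p = -(p - v) from (neg_sub p v).symm,
    stdOrient.oangle_neg_left he hf,
    ← Real.Angle.coe_toReal (stdOrient.oangle (p - v) (q - v)), ← Real.Angle.coe_add]
  set θ := (stdOrient.oangle (p - v) (q - v)).toReal with hθdef
  have hcoe : ((θ + π : ℝ) : Real.Angle) = ((θ - π : ℝ) : Real.Angle) :=
    Real.Angle.angle_eq_iff_two_pi_dvd_sub.2 ⟨1, by push_cast; ring⟩
  rw [hcoe, Real.Angle.toReal_coe_eq_self_iff.2
    ⟨by linarith [hθf.1, hθf.2, Real.pi_pos], by linarith [hθf.1, hθf.2, Real.pi_pos]⟩]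
  linarith [hθf.2]
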